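/- arXiv:1711.04729 — 5 statements merged into one kernel-verified Lean document; each statement's English description precedes it below -/
import Mathlib

section
/- Define F(x) = 2·log(1 + e^{x/2}) for real x. Then for all L₁, L₂, ℓ > 0, 1 − (1/L₁)·log((cosh(L₂/2) + cosh((L₁+ℓ)/2)) / (cosh(L₂/2) + cosh((L₁−ℓ)/2))) = (1/(2L₁))·(F(L₁ − L₂ − ℓ) + F(L₁ + L₂ − ℓ) − F(−L₁ + L₂ − ℓ) − F(−L₁ − L₂ − ℓ)). -/
theorem mirzakhani_B_kernel_identity
    (F : ℝ → ℝ) (hF : ∀ x, F x = 2 * Real.log (1 + Real.exp (x / 2)))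
    (L₁ L₂ ℓ : ℝ) (hL₁ : 0 < L₁) (hL₂ : 0 < L₂) (hℓ : 0 < ℓ) :
    1 - (1 / L₁) * Real.log ((Real.cosh (L₂ / 2) + Real.cosh ((L₁ + ℓ) / 2)) /
        (Real.cosh (L₂ / 2) + Real.cosh ((L₁ - ℓ) / 2)))
    = (1 / (2 * L₁)) * (F (L₁ - L₂ - ℓ) + F (L₁ + L₂ - ℓ)
        - F (-L₁ + L₂ - ℓ) - F (-L₁ - L₂ - ℓ)) := by
  -- reflection identity for log(1 + exp)
  have hg : ∀ x : ℝ, Real.log (1 + Real.exp (x / 2))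
      = x / 2 + Real.log (1 + Real.exp (-x / 2)) := by
    intro x
    have h1 : (1 : ℝ) + Real.exp (x / 2)
        = Real.exp (x / 2) * (1 + Real.exp (-x / 2)) := by
      rw [mul_add, mul_one, ← Real.exp_add,
        show x / 2 + -x / 2 = (0:ℝ) by ring, Real.exp_zero]
      ring
    rw [h1, Real.log_mul (by positivity) (by positivity), Real.log_exp]
  -- product formula for sum of cosh
  have key : ∀ u v : ℝ, Real.cosh u + Real.cosh v
      = (1 + Real.exp (u + v)) * (1 + Real.exp (u - v)) / (2 * Real.exp u) := by
    intro u v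
    have huv : Real.exp (u + v) = Real.exp u * Real.exp v := Real.exp_add u v
    have huv' : Real.exp (u - v) = Real.exp u / Real.exp v := Real.exp_sub u v
    rw [Real.cosh_eq, Real.cosh_eq, Real.exp_neg, Real.exp_neg, huv, huv']
    have h1 := Real.exp_ne_zero u
    have h2 := Real.exp_ne_zero v
    field_simp
    ring
  have hN := key (L₂ / 2) ((L₁ + ℓ) / 2)
  have hD := key (L₂ / 2) ((L₁ - ℓ) / 2)
  set A1 : ℝ := 1 + Real.exp ((L₁ + L₂ + ℓ) / 2) with hA1
  set B1 : ℝ := 1 + Real.exp ((-L₁ + L₂ - ℓ) / 2) with hB1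
  set A2 : ℝ := 1 + Real.exp ((L₁ + L₂ - ℓ) / 2) with hA2
  set B2 : ℝ := 1 + Real.exp ((-L₁ + L₂ + ℓ) / 2) with hB2
  have hA1pos : 0 < A1 := by positivity
  have hB1pos : 0 < B1 := by positivity
  have hA2pos : 0 < A2 := by positivity
  have hB2pos : 0 < B2 := by positivity
  have eN : Real.cosh (L₂ / 2) + Real.cosh ((L₁ + ℓ) / 2)
      = A1 * B1 / (2 * Real.exp (L₂ / 2)) := by
    rw [hN, hA1, hB1]
    congr 3 <;> [skip; skip] <;> ring_nf
  have eD : Real.cosh (L₂ / 2) + Real.cosh ((L₁ - ℓ) / 2)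
      = A2 * B2 / (2 * Real.exp (L₂ / 2)) := by
    rw [hD, hA2, hB2]
    congr 3 <;> ring_nf
  have hquot : (Real.cosh (L₂ / 2) + Real.cosh ((L₁ + ℓ) / 2)) /
      (Real.cosh (L₂ / 2) + Real.cosh ((L₁ - ℓ) / 2)) = (A1 * B1) / (A2 * B2) := by
    rw [eN, eD]
    have : (0:ℝ) < 2 * Real.exp (L₂ / 2) := by positivity
    field_simp
  have hlog : Real.log ((A1 * B1) / (A2 * B2))
      = Real.log A1 + Real.log B1 - (Real.log A2 + Real.log B2) := by
    rw [Real.log_div (by positivity) (by positivity),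
      Real.log_mul (ne_of_gt hA1pos) (ne_of_gt hB1pos),
      Real.log_mul (ne_of_gt hA2pos) (ne_of_gt hB2pos)]
  -- express logs via F
  have e1 : Real.log A1 = (L₁ + L₂ + ℓ) / 2 + F (-L₁ - L₂ - ℓ) / 2 := by
    rw [hA1, hF]
    have := hg (L₁ + L₂ + ℓ)
    rw [this]
    ring_nf
  have e2 : Real.log B1 = F (-L₁ + L₂ - ℓ) / 2 := by
    rw [hB1, hF]; ring
  have e3 : Real.log A2 = F (L₁ + L₂ - ℓ) / 2 := by
    rw [hA2, hF]; ring
  have e4 : Real.log B2 = (-L₁ + L₂ + ℓ) / 2 + F (L₁ - L₂ - ℓ) / 2 := by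
    rw [hB2, hF]
    have := hg (-L₁ + L₂ + ℓ)
    rw [show ((-L₁ + L₂ + ℓ) / 2 : ℝ) = (-L₁ + L₂ + ℓ) / 2 from rfl, this]
    ring_nf
  rw [hquot, hlog, e1, e2, e3, e4]
  have hL₁' : L₁ ≠ 0 := ne_of_gt hL₁
  field_simp
  ring
end

section
/- Define C^M(L₁, ℓ, ℓ') = (2/L₁)·log((e^{L₁/2} + e^{(ℓ+ℓ')/2})/(e^{−L₁/2} + e^{(ℓ+ℓ')/2})). Then (1/2)·∫₀^∞ ℓ·C^M(L₁, ℓ, ℓ) dℓ = π²/12 + L₁²/48 for every L₁ > 0. -/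
/-!
With `softplus x = log (1 + exp x)` and `a = L₁ / 2`, the logarithm in the kernel is
`softplus (a - ℓ) - softplus (-a - ℓ)`. Substituting `x = ℓ ∓ a` turns the two halves into
integrals of `(x ± a) * softplus (-x)` over `(∓a, ∞)`. The parts over `(0, ∞)` differ by
`2a ∫₀^∞ log (1 + e⁻ˣ) dx = 2a * π² / 12`, obtained by expanding the logarithm in powers of `e⁻ˣ`
and summing `∑ (-1)ⁿ / (n + 1)² = π² / 12`. The two remaining pieces over `(-a, 0)` and `(0, a)`
combine, through `softplus x - softplus (-x) = x`, into `∫_{-a}^0 -(x + a) x dx = a³ / 6`.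
-/

open MeasureTheory Real Set Filter Asymptotics

noncomputable def softplus (x : ℝ) : ℝ := log (1 + exp x)

lemma one_add_exp_pos (x : ℝ) : 0 < 1 + exp x := by positivity

lemma softplus_nonneg (x : ℝ) : 0 ≤ softplus x :=
  log_nonneg (by linarith [exp_pos x])

lemma softplus_le_exp (x : ℝ) : softplus x ≤ exp x := by
  simpa [softplus] using log_le_sub_one_of_pos (one_add_exp_pos x)

@[fun_prop]
lemma continuous_softplus : Continuous softplus := by
  unfold softplus; fun_prop (disch := exact fun x => (one_add_exp_pos x).ne')

lemma log_exp_add_exp (s t : ℝ) : log (exp s + exp t) = t + softplus (s - t) := by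
  rw [softplus, ← log_exp t, ← log_mul (exp_ne_zero t) (one_add_exp_pos _).ne', log_exp,
    mul_add, mul_one, ← exp_add, add_sub_cancel, add_comm]

lemma softplus_sub_softplus_neg (x : ℝ) : softplus x - softplus (-x) = x := by
  have h := log_exp_add_exp 0 x
  rw [exp_zero, zero_sub] at h
  rw [softplus, h, add_sub_cancel_right]

lemma softplus_sub_isBigO (d : ℝ) :
    (fun x => softplus (d - x)) =O[atTop] fun x => exp (-x) := by
  refine IsBigO.of_bound (exp d) (Eventually.of_forall fun x => ?_)
  rw [norm_of_nonneg (softplus_nonneg _), norm_of_nonneg (exp_pos _).le, ← exp_add]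
  exact (softplus_le_exp _).trans_eq (by ring_nf)

lemma integrableOn_add_mul_softplus_sub (b c d : ℝ) :
    IntegrableOn (fun x => (x + c) * softplus (d - x)) (Ioi b) := by
  refine integrable_of_isBigO_exp_neg one_half_pos (by fun_prop) ?_
  have hid : (fun x : ℝ => x) =O[atTop] fun x => exp (x / 2) := by
    simpa [div_eq_inv_mul] using (isLittleO_pow_exp_pos_mul_atTop 1 (inv_pos.2 two_pos)).isBigO
  have hlin := hid.add ((isLittleO_const_id_atTop c).isBigO.trans hid)
  refine (hlin.mul (softplus_sub_isBigO d)).congr_right fun x => ?_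
  rw [← exp_add]; ring_nf

lemma hasSum_inv_succ_sq : HasSum (fun n : ℕ => 1 / ((n : ℝ) + 1) ^ 2) (π ^ 2 / 6) := by
  simpa using (hasSum_nat_add_iff' 1).2 hasSum_zeta_two

lemma hasSum_neg_one_pow_div_succ_sq :
    HasSum (fun n : ℕ => (-1 : ℝ) ^ n / ((n : ℝ) + 1) ^ 2) (π ^ 2 / 12) := by
  have hodd : HasSum (fun n : ℕ => (1 - (-1 : ℝ) ^ n) / ((n : ℝ) + 1) ^ 2)
      (0 + 1 / 2 * (π ^ 2 / 6)) := by
    refine .even_add_odd (hasSum_zero.congr_fun fun k => ?_)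
      ((hasSum_inv_succ_sq.mul_left (1 / 2)).congr_fun fun k => ?_)
    · simp [pow_mul]
    · rw [pow_succ, pow_mul, neg_one_sq, one_pow]
      push_cast
      field_simp
      ring
  have h := hasSum_inv_succ_sq.sub hodd
  rw [show π ^ 2 / 6 - (0 + 1 / 2 * (π ^ 2 / 6)) = π ^ 2 / 12 by ring] at h
  exact h.congr_fun fun n => by ring

lemma hasSum_softplus_neg {u : ℝ} (hu : 0 < u) :
    HasSum (fun n : ℕ => (-1 : ℝ) ^ n / (n + 1) * exp (-(n + 1) * u)) (softplus (-u)) := by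
  have hx : |-exp (-u)| < 1 := by
    rw [abs_neg, abs_of_pos (exp_pos _), exp_lt_one_iff]; linarith
  have h := (hasSum_pow_div_log_of_abs_lt_one hx).neg
  rw [neg_neg, sub_neg_eq_add] at h
  refine h.congr_fun fun n => ?_
  rw [neg_pow (exp (-u)), ← exp_nat_mul, pow_succ]
  push_cast
  ring_nf

lemma integral_softplus_neg_Ioi : ∫ u in Ioi 0, softplus (-u) = π ^ 2 / 12 := by
  set F : ℕ → ℝ → ℝ := fun n u => (-1 : ℝ) ^ n / (n + 1) * exp (-(n + 1) * u)
  have hrate (n : ℕ) : -((n : ℝ) + 1) < 0 := by linarith [n.cast_nonneg (α := ℝ)]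
  have hF_int (n : ℕ) : IntegrableOn (F n) (Ioi 0) :=
    (integrableOn_exp_mul_Ioi (hrate n) 0).const_mul _
  have hF (n : ℕ) : ∫ u in Ioi 0, F n u = (-1 : ℝ) ^ n / ((n : ℝ) + 1) ^ 2 := by
    rw [integral_const_mul, integral_exp_mul_Ioi (hrate n)]
    field_simp
    simp
  have hF_norm (n : ℕ) : ∫ u in Ioi 0, ‖F n u‖ = 1 / ((n : ℝ) + 1) ^ 2 := by
    simp only [F, norm_mul, norm_div, norm_pow, norm_neg, norm_one, one_pow,
      norm_of_nonneg (exp_pos _).le, norm_of_nonneg (by positivity : (0 : ℝ) ≤ n + 1)]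
    rw [integral_const_mul, integral_exp_mul_Ioi (hrate n)]
    field_simp
    simp
  have hsum := integral_tsum_of_summable_integral_norm hF_int
    ((funext hF_norm) ▸ hasSum_inv_succ_sq.summable)
  rw [← setIntegral_congr_fun measurableSet_Ioi fun u hu => (hasSum_softplus_neg hu).tsum_eq,
    ← hsum, tsum_congr hF, hasSum_neg_one_pow_div_succ_sq.tsum_eq]

lemma integral_Ioi_comp_add_right (f : ℝ → ℝ) (c d : ℝ) :
    ∫ x in Ioi c, f (x + d) = ∫ x in Ioi (c + d), f x := by
  simpa using (measurePreserving_add_right volume d).setIntegral_preimage_emb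
    (measurableEmbedding_addRight d) f (Ioi (c + d))

lemma integrableOn_add_mul_softplus_neg (b c : ℝ) :
    IntegrableOn (fun x => (x + c) * softplus (-x)) (Ioi b) := by
  simpa using integrableOn_add_mul_softplus_sub b c 0

lemma integral_Ioi_mul_softplus_sub (a : ℝ) :
    ∫ ℓ in Ioi 0, ℓ * softplus (a - ℓ) =
      (∫ x in -a..0, (x + a) * softplus (-x)) + ∫ x in Ioi 0, (x + a) * softplus (-x) := by
  have hshift := integral_Ioi_comp_add_right (fun x => (x + a) * softplus (-x)) 0 (-a)
  simp only [neg_add_cancel_right, neg_add, neg_neg, zero_add] at hshift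
  rw [intervalIntegral.integral_interval_add_Ioi (integrableOn_add_mul_softplus_neg _ a)
    (integrableOn_add_mul_softplus_neg _ a), ← hshift]
  congr 1 with ℓ
  ring_nf

lemma integral_add_mul_softplus_neg_sub_reflect (a : ℝ) :
    (∫ x in -a..0, (x + a) * softplus (-x)) - ∫ x in a..0, (x - a) * softplus (-x) =
      a ^ 3 / 6 := by
  have hreflect : ∫ x in a..0, (x - a) * softplus (-x) = ∫ x in -a..0, (x + a) * softplus x := by
    have h := intervalIntegral.integral_comp_neg (a := a) (b := 0)
      fun y => (-y - a) * softplus y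
    simp only [neg_neg, neg_zero] at h
    rw [h, intervalIntegral.integral_symm, ← intervalIntegral.integral_neg]
    congr 1 with x
    ring
  have hpoly : (fun x => (x + a) * softplus (-x) - (x + a) * softplus x) =
      fun x => -x ^ 2 - a * x := by
    ext x
    have h := softplus_sub_softplus_neg (-x)
    rw [neg_neg] at h
    rw [← mul_sub, h]
    ring
  rw [hreflect, ← intervalIntegral.integral_sub (Continuous.intervalIntegrable (by fun_prop) _ _)
    (Continuous.intervalIntegrable (by fun_prop) _ _), hpoly,
    intervalIntegral.integral_sub (Continuous.intervalIntegrable (by fun_prop) _ _)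
    (Continuous.intervalIntegrable (by fun_prop) _ _), intervalIntegral.integral_neg,
    intervalIntegral.integral_const_mul, integral_pow, integral_id]
  ring

lemma integral_Ioi_mul_softplus_sub_sub (a : ℝ) :
    ∫ ℓ in Ioi 0, ℓ * (softplus (a - ℓ) - softplus (-a - ℓ)) = a ^ 3 / 6 + a * π ^ 2 / 6 := by
  have hlin : (∫ x in Ioi 0, (x + a) * softplus (-x)) - ∫ x in Ioi 0, (x - a) * softplus (-x) =
      a * π ^ 2 / 6 := by
    have hint : IntegrableOn (fun x => (x - a) * softplus (-x)) (Ioi 0) := by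
      simpa only [sub_eq_add_neg] using integrableOn_add_mul_softplus_neg 0 (-a)
    rw [← integral_sub (integrableOn_add_mul_softplus_neg 0 a) hint]
    simp_rw [← sub_mul, add_sub_sub_cancel]
    rw [integral_const_mul, integral_softplus_neg_Ioi]
    ring
  have hint (d : ℝ) : IntegrableOn (fun ℓ => ℓ * softplus (d - ℓ)) (Ioi 0) := by
    simpa using integrableOn_add_mul_softplus_sub 0 0 d
  simp_rw [mul_sub]
  rw [integral_sub (hint a) (hint (-a)), integral_Ioi_mul_softplus_sub,
    integral_Ioi_mul_softplus_sub, neg_neg]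
  simp only [← sub_eq_add_neg]
  linarith [integral_add_mul_softplus_neg_sub_reflect a]

theorem mirzakhani_VD (L₁ : ℝ) (hL₁ : 0 < L₁) :
    (1 / 2) * ∫ ℓ in Set.Ioi (0 : ℝ),
        ℓ * ((2 / L₁) * Real.log ((Real.exp (L₁ / 2) + Real.exp ((ℓ + ℓ) / 2)) /
          (Real.exp (-L₁ / 2) + Real.exp ((ℓ + ℓ) / 2))))
      = Real.pi ^ 2 / 12 + L₁ ^ 2 / 48 := by
  have hkernel (ℓ : ℝ) : Real.log ((Real.exp (L₁ / 2) + Real.exp ((ℓ + ℓ) / 2)) /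
      (Real.exp (-L₁ / 2) + Real.exp ((ℓ + ℓ) / 2))) =
      softplus (L₁ / 2 - ℓ) - softplus (-(L₁ / 2) - ℓ) := by
    rw [log_div (by positivity) (by positivity), log_exp_add_exp, log_exp_add_exp, neg_div]
    ring_nf
  have hL : L₁ ≠ 0 := hL₁.ne'
  simp_rw [hkernel, mul_left_comm _ (2 / L₁), integral_const_mul,
    integral_Ioi_mul_softplus_sub_sub]
  field_simp
  ring
end

section
/- Fix ε ∈ (0,1) and L₁ ≥ ε, and suppose L₂ + L₃ ≤ L₁ with L₂, L₃ > 0. Let c be defined by cosh(c/2) = √(sinh²(L₁/2) + cosh²(L₃/2) + cosh²(L₂/2) + 2·cosh(L₁/2)·cosh(L₂/2)·cosh(L₃/2)) / sinh(L₁/2). Then c ≤ log(128/ε²). -/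
private lemma small_pants_aux (E s ε : ℝ) (hε0 : 0 < ε) (hε1 : ε < 1)
    (hE : 0 ≤ E) (h5 : E * s ^ 2 ≤ 20 * s ^ 2 + 16)
    (hsge : ε / 2 ≤ s) (hsp : 0 < s) : E * ε ^ 2 ≤ 128 := by
  have hs2 : ε ^ 2 / 4 ≤ s ^ 2 := by nlinarith
  have hεsq : ε ^ 2 ≤ 1 := by nlinarith
  have h7 : E * ε ^ 2 * s ^ 2 ≤ 128 * s ^ 2 := by
    nlinarith [mul_le_mul_of_nonneg_right h5 (sq_nonneg ε),
      mul_nonneg (sq_nonneg s) (by linarith : (0:ℝ) ≤ 1 - ε ^ 2)]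
  exact le_of_mul_le_mul_right h7 (by positivity)

theorem small_pants_curve_bound
    (ε L₁ L₂ L₃ c : ℝ)
    (hε0 : 0 < ε) (hε1 : ε < 1)
    (hL₁ : ε ≤ L₁) (hL₂ : 0 < L₂) (hL₃ : 0 < L₃) (hsmall : L₂ + L₃ ≤ L₁)
    (hc : 0 ≤ c)
    (hcosh : Real.cosh (c / 2)
      = Real.sqrt (Real.sinh (L₁ / 2) ^ 2 + Real.cosh (L₃ / 2) ^ 2
            + Real.cosh (L₂ / 2) ^ 2
            + 2 * Real.cosh (L₁ / 2) * Real.cosh (L₂ / 2) * Real.cosh (L₃ / 2)) /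
          Real.sinh (L₁ / 2)) :
    c ≤ Real.log (128 / ε ^ 2) := by
  have hL1pos : 0 < L₁ := lt_of_lt_of_le hε0 hL₁
  set s := Real.sinh (L₁ / 2) with hs
  have hspos : 0 < s := Real.sinh_pos_iff.mpr (by linarith)
  -- s ≥ ε/2
  have hsge : ε / 2 ≤ s := by
    calc ε / 2 ≤ Real.sinh (ε / 2) := Real.self_le_sinh_iff.mpr (by linarith)
    _ ≤ s := Real.sinh_le_sinh.mpr (by linarith)
  -- cosh bounds
  have hca := Real.cosh_pos (x := L₁ / 2)
  have hcb := Real.cosh_pos (x := L₂ / 2)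
  have hcd := Real.cosh_pos (x := L₃ / 2)
  have hmono : ∀ x y : ℝ, 0 ≤ x → x ≤ y → Real.cosh x ≤ Real.cosh y := by
    intro x y hx hxy
    rw [Real.cosh_le_cosh, abs_of_nonneg hx, abs_of_nonneg (le_trans hx hxy)]
    exact hxy
  have hb : Real.cosh (L₂ / 2) ≤ Real.cosh (L₁ / 2) := hmono _ _ (by linarith) (by linarith)
  have hd : Real.cosh (L₃ / 2) ≤ Real.cosh (L₁ / 2) := hmono _ _ (by linarith) (by linarith)
  -- product bound: cosh b * cosh d ≤ cosh (b + d) ≤ cosh a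
  have hprod : Real.cosh (L₂ / 2) * Real.cosh (L₃ / 2) ≤ Real.cosh (L₁ / 2) := by
    have h1 : Real.cosh (L₂ / 2) * Real.cosh (L₃ / 2) ≤ Real.cosh (L₂ / 2 + L₃ / 2) := by
      rw [Real.cosh_add]
      have := mul_nonneg (Real.sinh_nonneg_iff.mpr (by linarith : (0:ℝ) ≤ L₂ / 2))
        (Real.sinh_nonneg_iff.mpr (by linarith : (0:ℝ) ≤ L₃ / 2))
      linarith
    exact h1.trans (hmono _ _ (by linarith) (by linarith))
  have hcoshsq : Real.cosh (L₁ / 2) ^ 2 = s ^ 2 + 1 := by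
    rw [hs, Real.cosh_sq]
  -- bound the radicand
  set N := s ^ 2 + Real.cosh (L₃ / 2) ^ 2 + Real.cosh (L₂ / 2) ^ 2
      + 2 * Real.cosh (L₁ / 2) * Real.cosh (L₂ / 2) * Real.cosh (L₃ / 2) with hN
  have hNnonneg : 0 ≤ N := by positivity
  have hNle : N ≤ 5 * s ^ 2 + 4 := by
    have h2 : Real.cosh (L₂ / 2) ^ 2 ≤ s ^ 2 + 1 := by
      nlinarith [sq_nonneg (Real.cosh (L₂ / 2))]
    have h3 : Real.cosh (L₃ / 2) ^ 2 ≤ s ^ 2 + 1 := by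
      nlinarith [sq_nonneg (Real.cosh (L₃ / 2))]
    have h4 : 2 * Real.cosh (L₁ / 2) * Real.cosh (L₂ / 2) * Real.cosh (L₃ / 2)
        ≤ 2 * (s ^ 2 + 1) := by
      nlinarith
    rw [hN]; linarith
  -- cosh (c/2)^2 * s^2 = N
  have hsq : Real.cosh (c / 2) ^ 2 * s ^ 2 = N := by
    rw [hcosh, div_pow, Real.sq_sqrt hNnonneg, div_mul_cancel₀]
    positivity
  -- exp c ≤ 4 * cosh(c/2)^2
  have hexp : Real.exp c ≤ 4 * Real.cosh (c / 2) ^ 2 := by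
    have h1 : Real.exp (c / 2) ≤ 2 * Real.cosh (c / 2) := by
      rw [Real.cosh_eq]
      have := (Real.exp_pos (-(c / 2))).le
      linarith
    have h2 : Real.exp c = Real.exp (c / 2) ^ 2 := by
      rw [sq, ← Real.exp_add]; norm_num
    rw [h2]
    calc Real.exp (c / 2) ^ 2 ≤ (2 * Real.cosh (c / 2)) ^ 2 :=
          pow_le_pow_left₀ (Real.exp_pos (c / 2)).le h1 2
      _ = 4 * Real.cosh (c / 2) ^ 2 := by ring
  have hkey : Real.exp c ≤ 128 / ε ^ 2 := by
    have h5 : Real.exp c * s ^ 2 ≤ 20 * s ^ 2 + 16 := by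
      calc Real.exp c * s ^ 2 ≤ 4 * Real.cosh (c / 2) ^ 2 * s ^ 2 :=
            mul_le_mul_of_nonneg_right hexp (sq_nonneg s)
        _ = 4 * (Real.cosh (c / 2) ^ 2 * s ^ 2) := by ring
        _ = 4 * N := by rw [hsq]
        _ ≤ 4 * (5 * s ^ 2 + 4) := by linarith
        _ = 20 * s ^ 2 + 16 := by ring
    rw [le_div_iff₀ (by positivity)]
    exact small_pants_aux _ _ _ hε0 hε1 (Real.exp_pos c).le h5 hsge hspos
  rw [Real.le_log_iff_exp_le (by positivity)]
  exact hkey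
end

section
/- Let f: ℝ_{>0} → ℝ be measurable with |f(ℓ)| ≤ M_s/(ℓ^η (1+ℓ)^s) for some η ∈ [0,2), every s ≥ 0 and constants M_s. Let C: ℝ_{>0}³ → ℝ with |C(L₁,ℓ,ℓ')| ≤ M·(1+L₁)^t/((ℓℓ')^η (1 + max(ℓ+ℓ'−L₁,0))^s). Then the twisted kernel C[f](L₁,ℓ,ℓ') := C(L₁,ℓ,ℓ') + B(L₁,ℓ,ℓ')f(ℓ) + B(L₁,ℓ',ℓ)f(ℓ') + A(L₁,ℓ,ℓ')f(ℓ)f(ℓ'), where |A(L₁,ℓ,ℓ')| ≤ M(1+L₁)^t(1+ℓ)^t(1+ℓ')^t and |B(L₁,ℓ,ℓ')| ≤ M(1+L₁)^t(1+ℓ)^t/(ℓ'^η(1+max(ℓ'−L₁−ℓ,0))^s), satisfies a bound of the same form: for some η' ∈ [0,2), t' ≥ 0 and constants M'_s, |C[f](L₁,ℓ,ℓ')| ≤ M'_s·(1+L₁)^{t'}/((ℓℓ')^{η'}(1 + max(ℓ+ℓ'−L₁,0))^s). -/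
/-- Auxiliary bound for the `B · f` cross terms. -/
lemma twist_aux_B (η t s MB Mf : ℝ) (hs : 0 ≤ s)
    (hMB : 0 ≤ MB) (hMf : 0 ≤ Mf)
    (L₁ ℓ ℓ' b fv : ℝ) (hL : 0 < L₁) (hl : 0 < ℓ) (hl' : 0 < ℓ')
    (hb : |b| ≤ MB * (1 + L₁) ^ t * (1 + ℓ) ^ t /
      (ℓ' ^ η * (1 + max (ℓ' - L₁ - ℓ) 0) ^ s))
    (hfv : |fv| ≤ Mf / (ℓ ^ η * (1 + ℓ) ^ (s + t))) :
    |b * fv| ≤ 2 ^ s * MB * Mf * (1 + L₁) ^ t /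
      ((ℓ * ℓ') ^ η * (1 + max (ℓ + ℓ' - L₁) 0) ^ s) := by
  have hu : (0:ℝ) ≤ max (ℓ' - L₁ - ℓ) 0 := le_max_right _ _
  have hE0 : (0:ℝ) ≤ max (ℓ + ℓ' - L₁) 0 := le_max_right _ _
  have hDpos : (0:ℝ) < (ℓ * ℓ') ^ η * (1 + max (ℓ + ℓ' - L₁) 0) ^ s := by positivity
  rw [abs_mul]
  calc |b| * |fv|
      ≤ (MB * (1 + L₁) ^ t * (1 + ℓ) ^ t /
          (ℓ' ^ η * (1 + max (ℓ' - L₁ - ℓ) 0) ^ s)) * (Mf / (ℓ ^ η * (1 + ℓ) ^ (s + t))) :=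
        mul_le_mul hb hfv (abs_nonneg _) (by positivity)
    _ = (MB * (1 + L₁) ^ t * (1 + ℓ) ^ t * Mf) /
          ((ℓ' ^ η * (1 + max (ℓ' - L₁ - ℓ) 0) ^ s) * (ℓ ^ η * (1 + ℓ) ^ (s + t))) := by
        rw [div_mul_div_comm]
    _ ≤ 2 ^ s * MB * Mf * (1 + L₁) ^ t /
          ((ℓ * ℓ') ^ η * (1 + max (ℓ + ℓ' - L₁) 0) ^ s) := by
        rw [div_le_div_iff₀ (by positivity) hDpos]
        have key : (1 + max (ℓ + ℓ' - L₁) 0) ^ s ≤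
            2 ^ s * (1 + ℓ) ^ s * (1 + max (ℓ' - L₁ - ℓ) 0) ^ s := by
          have hmax : max (ℓ + ℓ' - L₁) 0 ≤ 2 * ℓ + max (ℓ' - L₁ - ℓ) 0 := by
            apply max_le
            · have := le_max_left (ℓ' - L₁ - ℓ) 0; linarith
            · linarith
          have hkey : 1 + max (ℓ + ℓ' - L₁) 0 ≤
              2 * (1 + ℓ) * (1 + max (ℓ' - L₁ - ℓ) 0) := by nlinarith [hl.le, hu]
          calc (1 + max (ℓ + ℓ' - L₁) 0) ^ s
              ≤ (2 * (1 + ℓ) * (1 + max (ℓ' - L₁ - ℓ) 0)) ^ s :=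
                Real.rpow_le_rpow (by linarith) hkey hs
            _ = 2 ^ s * (1 + ℓ) ^ s * (1 + max (ℓ' - L₁ - ℓ) 0) ^ s := by
                rw [Real.mul_rpow (by positivity) (by positivity),
                    Real.mul_rpow (by norm_num) (by positivity)]
        have hmr : (ℓ * ℓ') ^ η = ℓ ^ η * ℓ' ^ η := Real.mul_rpow hl.le hl'.le
        have hra : (1 + ℓ) ^ (s + t) = (1 + ℓ) ^ s * (1 + ℓ) ^ t :=
          Real.rpow_add (by linarith) s t
        rw [hmr, hra]
        calc MB * (1 + L₁) ^ t * (1 + ℓ) ^ t * Mf *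
              (ℓ ^ η * ℓ' ^ η * (1 + max (ℓ + ℓ' - L₁) 0) ^ s)
            = (MB * (1 + L₁) ^ t * (1 + ℓ) ^ t * Mf * ℓ ^ η * ℓ' ^ η) *
                (1 + max (ℓ + ℓ' - L₁) 0) ^ s := by ring
          _ ≤ (MB * (1 + L₁) ^ t * (1 + ℓ) ^ t * Mf * ℓ ^ η * ℓ' ^ η) *
                (2 ^ s * (1 + ℓ) ^ s * (1 + max (ℓ' - L₁ - ℓ) 0) ^ s) :=
              mul_le_mul_of_nonneg_left key (by positivity)
          _ = 2 ^ s * MB * Mf * (1 + L₁) ^ t *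
                (ℓ' ^ η * (1 + max (ℓ' - L₁ - ℓ) 0) ^ s *
                  (ℓ ^ η * ((1 + ℓ) ^ s * (1 + ℓ) ^ t))) := by ring

/-- Auxiliary bound for the `A · f · f` term. -/
lemma twist_aux_A (η t s MA Mf : ℝ) (hs : 0 ≤ s)
    (hMA : 0 ≤ MA) (hMf : 0 ≤ Mf)
    (L₁ ℓ ℓ' a fv fv' : ℝ) (hL : 0 < L₁) (hl : 0 < ℓ) (hl' : 0 < ℓ')
    (ha : |a| ≤ MA * (1 + L₁) ^ t * (1 + ℓ) ^ t * (1 + ℓ') ^ t)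
    (hfv : |fv| ≤ Mf / (ℓ ^ η * (1 + ℓ) ^ (s + t)))
    (hfv' : |fv'| ≤ Mf / (ℓ' ^ η * (1 + ℓ') ^ (s + t))) :
    |a * fv * fv'| ≤ MA * Mf * Mf * (1 + L₁) ^ t /
      ((ℓ * ℓ') ^ η * (1 + max (ℓ + ℓ' - L₁) 0) ^ s) := by
  have hE0 : (0:ℝ) ≤ max (ℓ + ℓ' - L₁) 0 := le_max_right _ _
  have hDpos : (0:ℝ) < (ℓ * ℓ') ^ η * (1 + max (ℓ + ℓ' - L₁) 0) ^ s := by positivity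
  rw [abs_mul, abs_mul]
  calc |a| * |fv| * |fv'|
      ≤ (MA * (1 + L₁) ^ t * (1 + ℓ) ^ t * (1 + ℓ') ^ t) *
          (Mf / (ℓ ^ η * (1 + ℓ) ^ (s + t))) * (Mf / (ℓ' ^ η * (1 + ℓ') ^ (s + t))) := by
        have h1 : |a| * |fv| ≤ (MA * (1 + L₁) ^ t * (1 + ℓ) ^ t * (1 + ℓ') ^ t) *
            (Mf / (ℓ ^ η * (1 + ℓ) ^ (s + t))) :=
          mul_le_mul ha hfv (abs_nonneg _) (by positivity)
        exact mul_le_mul h1 hfv' (abs_nonneg _) (by positivity)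
    _ = (MA * (1 + L₁) ^ t * (1 + ℓ) ^ t * (1 + ℓ') ^ t * Mf * Mf) /
          ((ℓ ^ η * (1 + ℓ) ^ (s + t)) * (ℓ' ^ η * (1 + ℓ') ^ (s + t))) := by
        rw [mul_div_assoc', mul_div_assoc', div_mul_eq_mul_div, div_div]
    _ ≤ MA * Mf * Mf * (1 + L₁) ^ t /
          ((ℓ * ℓ') ^ η * (1 + max (ℓ + ℓ' - L₁) 0) ^ s) := by
        rw [div_le_div_iff₀ (by positivity) hDpos]
        have key : (1 + max (ℓ + ℓ' - L₁) 0) ^ s ≤ (1 + ℓ) ^ s * (1 + ℓ') ^ s := by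
          have hmax : max (ℓ + ℓ' - L₁) 0 ≤ ℓ + ℓ' := by
            apply max_le <;> nlinarith [hl.le, hl'.le]
          have hkey : 1 + max (ℓ + ℓ' - L₁) 0 ≤ (1 + ℓ) * (1 + ℓ') := by
            nlinarith [hl.le, hl'.le]
          calc (1 + max (ℓ + ℓ' - L₁) 0) ^ s
              ≤ ((1 + ℓ) * (1 + ℓ')) ^ s := Real.rpow_le_rpow (by linarith) hkey hs
            _ = (1 + ℓ) ^ s * (1 + ℓ') ^ s :=
                Real.mul_rpow (by positivity) (by positivity)
        have hmr : (ℓ * ℓ') ^ η = ℓ ^ η * ℓ' ^ η := Real.mul_rpow hl.le hl'.le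
        have hra : (1 + ℓ) ^ (s + t) = (1 + ℓ) ^ s * (1 + ℓ) ^ t :=
          Real.rpow_add (by linarith) s t
        have hra' : (1 + ℓ') ^ (s + t) = (1 + ℓ') ^ s * (1 + ℓ') ^ t :=
          Real.rpow_add (by linarith) s t
        rw [hmr, hra, hra']
        calc MA * (1 + L₁) ^ t * (1 + ℓ) ^ t * (1 + ℓ') ^ t * Mf * Mf *
              (ℓ ^ η * ℓ' ^ η * (1 + max (ℓ + ℓ' - L₁) 0) ^ s)
            = (MA * (1 + L₁) ^ t * (1 + ℓ) ^ t * (1 + ℓ') ^ t * Mf * Mf * ℓ ^ η * ℓ' ^ η) *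
                (1 + max (ℓ + ℓ' - L₁) 0) ^ s := by ring
          _ ≤ (MA * (1 + L₁) ^ t * (1 + ℓ) ^ t * (1 + ℓ') ^ t * Mf * Mf * ℓ ^ η * ℓ' ^ η) *
                ((1 + ℓ) ^ s * (1 + ℓ') ^ s) :=
              mul_le_mul_of_nonneg_left key (by positivity)
          _ = MA * Mf * Mf * (1 + L₁) ^ t *
                (ℓ ^ η * ((1 + ℓ) ^ s * (1 + ℓ) ^ t) *
                  (ℓ' ^ η * ((1 + ℓ') ^ s * (1 + ℓ') ^ t))) := by ring

theorem twisting_preserves_strong_admissibility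
    (η t : ℝ) (hη0 : 0 ≤ η) (hη2 : η < 2) (ht : 0 ≤ t)
    (f : ℝ → ℝ) (hfm : Measurable f)
    (hf : ∀ s : ℝ, 0 ≤ s → ∃ Ms : ℝ, 0 < Ms ∧ ∀ ℓ : ℝ, 0 < ℓ →
      |f ℓ| ≤ Ms / (ℓ ^ η * (1 + ℓ) ^ s))
    (A B C : ℝ → ℝ → ℝ → ℝ)
    (hA : ∃ M : ℝ, 0 < M ∧ ∀ L₁ ℓ ℓ' : ℝ, 0 < L₁ → 0 < ℓ → 0 < ℓ' →
      |A L₁ ℓ ℓ'| ≤ M * (1 + L₁) ^ t * (1 + ℓ) ^ t * (1 + ℓ') ^ t)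
    (hB : ∀ s : ℝ, 0 ≤ s → ∃ Ms : ℝ, 0 < Ms ∧ ∀ L₁ ℓ ℓ' : ℝ, 0 < L₁ → 0 < ℓ → 0 < ℓ' →
      |B L₁ ℓ ℓ'| ≤ Ms * (1 + L₁) ^ t * (1 + ℓ) ^ t /
        (ℓ' ^ η * (1 + max (ℓ' - L₁ - ℓ) 0) ^ s))
    (hC : ∀ s : ℝ, 0 ≤ s → ∃ Ms : ℝ, 0 < Ms ∧ ∀ L₁ ℓ ℓ' : ℝ, 0 < L₁ → 0 < ℓ → 0 < ℓ' →
      |C L₁ ℓ ℓ'| ≤ Ms * (1 + L₁) ^ t /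
        ((ℓ * ℓ') ^ η * (1 + max (ℓ + ℓ' - L₁) 0) ^ s))
    (Cf : ℝ → ℝ → ℝ → ℝ)
    (hCf : ∀ L₁ ℓ ℓ' : ℝ, Cf L₁ ℓ ℓ'
      = C L₁ ℓ ℓ' + B L₁ ℓ ℓ' * f ℓ + B L₁ ℓ' ℓ * f ℓ' + A L₁ ℓ ℓ' * f ℓ * f ℓ') :
    ∃ η' : ℝ, 0 ≤ η' ∧ η' < 2 ∧ ∃ t' : ℝ, 0 ≤ t' ∧
      ∀ s : ℝ, 0 ≤ s → ∃ Ms' : ℝ, 0 < Ms' ∧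
        ∀ L₁ ℓ ℓ' : ℝ, 0 < L₁ → 0 < ℓ → 0 < ℓ' →
          |Cf L₁ ℓ ℓ'| ≤ Ms' * (1 + L₁) ^ t' /
            ((ℓ * ℓ') ^ η' * (1 + max (ℓ + ℓ' - L₁) 0) ^ s) := by
  obtain ⟨MA, hMA0, hMAb⟩ := hA
  refine ⟨η, hη0, hη2, t, ht, ?_⟩
  intro s hs
  obtain ⟨MC, hMC0, hMCb⟩ := hC s hs
  obtain ⟨MB, hMB0, hMBb⟩ := hB s hs
  obtain ⟨Mf, hMf0, hMfb⟩ := hf (s + t) (by linarith)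
  refine ⟨MC + 2 ^ s * MB * Mf + 2 ^ s * MB * Mf + MA * Mf * Mf, by positivity, ?_⟩
  intro L₁ ℓ ℓ' hL hl hl'
  have hE0 : (0:ℝ) ≤ max (ℓ + ℓ' - L₁) 0 := le_max_right _ _
  have hDpos : (0:ℝ) < (ℓ * ℓ') ^ η * (1 + max (ℓ + ℓ' - L₁) 0) ^ s := by positivity
  have h1 := hMCb L₁ ℓ ℓ' hL hl hl'
  have h2 := twist_aux_B η t s MB Mf hs hMB0.le hMf0.le L₁ ℓ ℓ'
    (B L₁ ℓ ℓ') (f ℓ) hL hl hl' (hMBb L₁ ℓ ℓ' hL hl hl') (hMfb ℓ hl)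
  have h3 := twist_aux_B η t s MB Mf hs hMB0.le hMf0.le L₁ ℓ' ℓ
    (B L₁ ℓ' ℓ) (f ℓ') hL hl' hl (hMBb L₁ ℓ' ℓ hL hl' hl) (hMfb ℓ' hl')
  rw [mul_comm ℓ' ℓ, add_comm ℓ' ℓ] at h3
  have h4 := twist_aux_A η t s MA Mf hs hMA0.le hMf0.le L₁ ℓ ℓ'
    (A L₁ ℓ ℓ') (f ℓ) (f ℓ') hL hl hl' (hMAb L₁ ℓ ℓ' hL hl hl') (hMfb ℓ hl) (hMfb ℓ' hl')
  rw [hCf]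
  have habs : |C L₁ ℓ ℓ' + B L₁ ℓ ℓ' * f ℓ + B L₁ ℓ' ℓ * f ℓ' + A L₁ ℓ ℓ' * f ℓ * f ℓ'|
      ≤ |C L₁ ℓ ℓ'| + |B L₁ ℓ ℓ' * f ℓ| + |B L₁ ℓ' ℓ * f ℓ'| + |A L₁ ℓ ℓ' * f ℓ * f ℓ'| := by
    calc _ ≤ |C L₁ ℓ ℓ' + B L₁ ℓ ℓ' * f ℓ + B L₁ ℓ' ℓ * f ℓ'| + |A L₁ ℓ ℓ' * f ℓ * f ℓ'| :=
          abs_add_le _ _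
      _ ≤ _ := by
          have := abs_add_three (C L₁ ℓ ℓ') (B L₁ ℓ ℓ' * f ℓ) (B L₁ ℓ' ℓ * f ℓ')
          linarith
  have hsum : (MC + 2 ^ s * MB * Mf + 2 ^ s * MB * Mf + MA * Mf * Mf) * (1 + L₁) ^ t /
        ((ℓ * ℓ') ^ η * (1 + max (ℓ + ℓ' - L₁) 0) ^ s)
      = MC * (1 + L₁) ^ t / ((ℓ * ℓ') ^ η * (1 + max (ℓ + ℓ' - L₁) 0) ^ s)
        + 2 ^ s * MB * Mf * (1 + L₁) ^ t / ((ℓ * ℓ') ^ η * (1 + max (ℓ + ℓ' - L₁) 0) ^ s)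
        + 2 ^ s * MB * Mf * (1 + L₁) ^ t / ((ℓ * ℓ') ^ η * (1 + max (ℓ + ℓ' - L₁) 0) ^ s)
        + MA * Mf * Mf * (1 + L₁) ^ t / ((ℓ * ℓ') ^ η * (1 + max (ℓ + ℓ' - L₁) 0) ^ s) := by
    ring
  linarith
end

section
/- Let B^M(L₁,L₂,ℓ) = (1/(2L₁))(F(L₁−L₂−ℓ) + F(L₁+L₂−ℓ) − F(−L₁+L₂−ℓ) − F(−L₁−L₂−ℓ)) with F(x) = 2 log(1+e^{x/2}). Then 0 < B^M(L₁,L₂,ℓ) < 1 for all L₁, L₂, ℓ > 0, and for every s ≥ 0 there is M_s with B^M(L₁,L₂,ℓ) ≤ M_s·(1+L₁)(1+L₂)/(1 + max(ℓ − L₁ − L₂, 0))^s. -/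
/-!
Write `F(x) = 2 log(1 + e^{x/2})` and `G_L(c) = F(c + L) - F(c - L)`, so that
`2 L₁ B(L₁, L₂, ℓ) = G_{L₁}(L₂ - ℓ) + G_{L₁}(-L₂ - ℓ)`. Both terms are positive because `F` is
increasing. The symmetry `F(x) = x + F(-x)` gives `G_L(c) + G_L(-c) = 2L`, hence
`2 L₁ (1 - B) = G_{L₁}(ℓ - L₂) - G_{L₁}(-L₂ - ℓ)`, which is positive for `ℓ > 0` because `F` is
strictly convex, i.e. `G_L` is strictly increasing. For the decay, `F' ≤ e^{x/2}` gives
`G_L(c) ≤ 2L e^{(c + L)/2}`, so `B ≤ 2 e^{-t/2}` with `t = max(ℓ - L₁ - L₂, 0)`, and `e^{t/2}`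
dominates every power `(1 + t)^s`.
-/

open Real

lemma log_sub_log_le_sub {x y : ℝ} (hx : 1 ≤ x) (hxy : x ≤ y) : log y - log x ≤ y - x := by
  have hx₀ : 0 < x := by linarith
  have hy₀ : 0 < y := by linarith
  rw [← log_div hy₀.ne' hx₀.ne']
  calc log (y / x) ≤ y / x - 1 := log_le_sub_one_of_pos (div_pos hy₀ hx₀)
    _ = (y - x) / x := by field_simp
    _ ≤ y - x := div_le_self (by linarith) hx

lemma exp_sub_exp_le_mul_exp (a b : ℝ) : exp b - exp a ≤ (b - a) * exp b := by
  have h := add_one_le_exp (a - b)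
  have : exp a = exp (a - b) * exp b := by rw [← exp_add, sub_add_cancel]
  nlinarith [exp_pos b]

lemma one_add_le_inv_mul_exp_mul {a : ℝ} (ha₀ : 0 < a) (ha₁ : a ≤ 1) (t : ℝ) :
    1 + t ≤ a⁻¹ * exp (a * t) := by
  rw [le_inv_mul_iff₀ ha₀]
  linarith [add_one_le_exp (a * t)]

lemma exists_one_add_rpow_le_mul_exp {s b : ℝ} (hs : 0 ≤ s) (hb : 0 < b) :
    ∃ C > 0, ∀ t ≥ 0, (1 + t) ^ s ≤ C * exp (b * t) := by
  set a := min 1 (b / (s + 1))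
  have ha₀ : 0 < a := lt_min one_pos (by positivity)
  have has : a * s ≤ b := calc
    a * s ≤ b / (s + 1) * s := by gcongr; exact min_le_right _ _
    _ ≤ b := by rw [div_mul_eq_mul_div, div_le_iff₀ (by positivity)]; nlinarith
  refine ⟨a⁻¹ ^ s, by positivity, fun t ht => ?_⟩
  calc (1 + t) ^ s ≤ (a⁻¹ * exp (a * t)) ^ s :=
        rpow_le_rpow (by linarith) (one_add_le_inv_mul_exp_mul ha₀ (min_le_left _ _) t) hs
    _ = a⁻¹ ^ s * exp (a * s * t) := by
        rw [mul_rpow (by positivity) (exp_pos _).le, ← exp_mul, mul_right_comm]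
    _ ≤ a⁻¹ ^ s * exp (b * t) := by gcongr

noncomputable def mirzakhaniF (x : ℝ) : ℝ := 2 * log (1 + exp (x / 2))

lemma mirzakhaniF_strictMono : StrictMono mirzakhaniF := fun x y hxy => by
  unfold mirzakhaniF
  gcongr

lemma mirzakhaniF_eq_add_neg (x : ℝ) : mirzakhaniF x = x + mirzakhaniF (-x) := by
  have h : 1 + exp (x / 2) = exp (x / 2) * (1 + exp (-x / 2)) := by
    rw [mul_add, ← exp_add, neg_div, add_neg_cancel, exp_zero, mul_one, add_comm]
  unfold mirzakhaniF
  rw [h, log_mul (exp_pos _).ne' (by positivity), log_exp, neg_div]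
  ring

lemma mirzakhaniF_sub_le {x y : ℝ} (hxy : x ≤ y) :
    mirzakhaniF y - mirzakhaniF x ≤ (y - x) * exp (y / 2) := by
  have hexp : exp (x / 2) ≤ exp (y / 2) := exp_le_exp.2 (by linarith)
  have hlog := log_sub_log_le_sub (le_add_of_nonneg_right (exp_pos (x / 2)).le)
    (add_le_add_right hexp 1)
  have := exp_sub_exp_le_mul_exp (x / 2) (y / 2)
  unfold mirzakhaniF
  linarith

noncomputable def mirzakhaniGap (L c : ℝ) : ℝ := mirzakhaniF (c + L) - mirzakhaniF (c - L)

lemma mirzakhaniGap_pos {L : ℝ} (hL : 0 < L) (c : ℝ) : 0 < mirzakhaniGap L c :=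
  sub_pos.2 (mirzakhaniF_strictMono (by linarith))

lemma mirzakhaniGap_add_neg (L c : ℝ) : mirzakhaniGap L c + mirzakhaniGap L (-c) = 2 * L := by
  unfold mirzakhaniGap
  rw [mirzakhaniF_eq_add_neg (c + L), mirzakhaniF_eq_add_neg (c - L)]
  ring_nf

lemma mirzakhaniGap_strictMono {L : ℝ} (hL : 0 < L) : StrictMono (mirzakhaniGap L) := by
  intro c d hcd
  have hexp (x y : ℝ) : exp ((x + y) / 2) = exp (x / 2) * exp (y / 2) := by rw [add_div, exp_add]
  have hcd' : exp (c / 2) < exp (d / 2) := exp_lt_exp.2 (by linarith)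
  have hL' : exp (-L / 2) < exp (L / 2) := exp_lt_exp.2 (by linarith)
  have key : (1 + exp ((c + L) / 2)) * (1 + exp ((d + -L) / 2)) <
      (1 + exp ((d + L) / 2)) * (1 + exp ((c + -L) / 2)) := by
    simp only [hexp]
    -- after expanding, the difference of the two sides is `(e^{d/2} - e^{c/2}) (e^{L/2} - e^{-L/2})`
    nlinarith [mul_pos (sub_pos.2 hcd') (sub_pos.2 hL')]
  have hlog := log_lt_log (by positivity) key
  rw [log_mul (by positivity) (by positivity), log_mul (by positivity) (by positivity)] at hlog
  unfold mirzakhaniGap mirzakhaniF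
  simp only [sub_eq_add_neg]
  linarith

lemma mirzakhaniGap_le {L : ℝ} (hL : 0 ≤ L) (c : ℝ) :
    mirzakhaniGap L c ≤ 2 * L * exp ((c + L) / 2) := by
  have := mirzakhaniF_sub_le (show c - L ≤ c + L by linarith)
  rwa [show c + L - (c - L) = 2 * L by ring] at this

noncomputable def mirzakhaniB (L₁ L₂ ℓ : ℝ) : ℝ := (1 / (2 * L₁)) *
  (mirzakhaniF (L₁ - L₂ - ℓ) + mirzakhaniF (L₁ + L₂ - ℓ) - mirzakhaniF (-L₁ + L₂ - ℓ) -
    mirzakhaniF (-L₁ - L₂ - ℓ))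

lemma mirzakhaniB_eq (L₁ L₂ ℓ : ℝ) :
    mirzakhaniB L₁ L₂ ℓ = (mirzakhaniGap L₁ (L₂ - ℓ) + mirzakhaniGap L₁ (-L₂ - ℓ)) / (2 * L₁) := by
  unfold mirzakhaniB mirzakhaniGap
  ring_nf

section

variable {L₁ L₂ ℓ : ℝ}

lemma mirzakhaniB_pos (h₁ : 0 < L₁) : 0 < mirzakhaniB L₁ L₂ ℓ := by
  rw [mirzakhaniB_eq]
  have := mirzakhaniGap_pos h₁ (L₂ - ℓ)
  have := mirzakhaniGap_pos h₁ (-L₂ - ℓ)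
  positivity

lemma mirzakhaniB_lt_one (h₁ : 0 < L₁) (hℓ : 0 < ℓ) : mirzakhaniB L₁ L₂ ℓ < 1 := by
  have hsymm := mirzakhaniGap_add_neg L₁ (L₂ - ℓ)
  have hconv := mirzakhaniGap_strictMono h₁ (show -L₂ - ℓ < -(L₂ - ℓ) by linarith)
  rw [mirzakhaniB_eq, div_lt_one (by positivity)]
  linarith

lemma mirzakhaniB_le_two_mul_exp (h₁ : 0 < L₁) (h₂ : 0 < L₂) (hℓ : 0 < ℓ) :
    mirzakhaniB L₁ L₂ ℓ ≤ 2 * exp (-max (ℓ - L₁ - L₂) 0 / 2) := by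
  rcases le_total ℓ (L₁ + L₂) with hle | hlt
  · rw [max_eq_right (by linarith), neg_zero, zero_div, exp_zero]
    linarith [mirzakhaniB_lt_one h₁ hℓ (L₂ := L₂)]
  · rw [max_eq_left (by linarith), mirzakhaniB_eq, div_le_iff₀ (by positivity)]
    have hG₁ := mirzakhaniGap_le h₁.le (L₂ - ℓ)
    have hG₂ := mirzakhaniGap_le h₁.le (-L₂ - ℓ)
    have hexp : exp ((-L₂ - ℓ + L₁) / 2) ≤ exp ((L₂ - ℓ + L₁) / 2) := exp_le_exp.2 (by linarith)
    rw [show -(ℓ - L₁ - L₂) / 2 = (L₂ - ℓ + L₁) / 2 by ring]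
    nlinarith

end

theorem mirzakhani_B_bounds
    (F : ℝ → ℝ) (hF : ∀ x, F x = 2 * Real.log (1 + Real.exp (x / 2)))
    (B : ℝ → ℝ → ℝ → ℝ)
    (hB : ∀ L₁ L₂ ℓ : ℝ, B L₁ L₂ ℓ = (1 / (2 * L₁)) *
      (F (L₁ - L₂ - ℓ) + F (L₁ + L₂ - ℓ) - F (-L₁ + L₂ - ℓ) - F (-L₁ - L₂ - ℓ))) :
    (∀ L₁ L₂ ℓ : ℝ, 0 < L₁ → 0 < L₂ → 0 < ℓ → 0 < B L₁ L₂ ℓ ∧ B L₁ L₂ ℓ < 1) ∧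
    (∀ s : ℝ, 0 ≤ s → ∃ Ms : ℝ, 0 < Ms ∧ ∀ L₁ L₂ ℓ : ℝ, 0 < L₁ → 0 < L₂ → 0 < ℓ →
      B L₁ L₂ ℓ ≤ Ms * (1 + L₁) * (1 + L₂) / (1 + max (ℓ - L₁ - L₂) 0) ^ s) := by
  obtain rfl : F = mirzakhaniF := funext hF
  obtain rfl : B = mirzakhaniB := funext fun L₁ => funext fun L₂ => funext (hB L₁ L₂)
  refine ⟨fun L₁ L₂ ℓ h₁ _ hℓ => ⟨mirzakhaniB_pos h₁, mirzakhaniB_lt_one h₁ hℓ⟩, fun s hs => ?_⟩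
  obtain ⟨C, hC, hpow⟩ := exists_one_add_rpow_le_mul_exp hs (one_half_pos (α := ℝ))
  refine ⟨2 * C, by positivity, fun L₁ L₂ ℓ h₁ h₂ hℓ => ?_⟩
  set t := max (ℓ - L₁ - L₂) 0
  have ht : 0 ≤ t := le_max_right _ _
  rw [le_div_iff₀ (by positivity)]
  calc mirzakhaniB L₁ L₂ ℓ * (1 + t) ^ s ≤ 2 * exp (-t / 2) * (C * exp (1 / 2 * t)) := by
        gcongr
        exacts [mirzakhaniB_le_two_mul_exp h₁ h₂ hℓ, hpow t ht]
    _ = 2 * C := by rw [mul_mul_mul_comm, ← exp_add, show -t / 2 + 1 / 2 * t = 0 by ring, exp_zero,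
          mul_one]
    _ ≤ 2 * C * (1 + L₁) * (1 + L₂) := by
        rw [mul_assoc (2 * C)]
        exact le_mul_of_one_le_right (by positivity) (by nlinarith)
end
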